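/- Kind shapes are stable under hereditary substitution: for any kind J, variable X, shape k, and elimination A, |J[X:=A]_k| ≡ |J|, where [·:=·]_k denotes hereditary substitution at shape k. -/

import Mathlib

set_option autoImplicit true
set_option maxHeartbeats 1000000
set_option linter.unusedVariables false

/-- Shapes (simple kinds): `k ::= ∗ | k → k`. -/
inductive SKind : Type
  | star
  | arr (j k : SKind)
/-! ## Spine-form syntax of Fω.. types and kinds (de Bruijn representation). -/

mutual
/-- Eliminations: a head applied to a spine of arguments, `E ::= F E⃗`. -/
inductive SpTy : Type
  | elim (h : SpHead) (s : SpSpine)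

/-- Heads: `F ::= X | ⊤ | ⊥ | D → E | ∀X:K.E | λX:K.E`. -/
inductive SpHead : Type
  | var (x : ℕ)
  | top
  | bot
  | arr (a b : SpTy)
  | all (k : SpKd) (a : SpTy)
  | lam (k : SpKd) (a : SpTy)

/-- Spines: finite sequences of eliminations. -/
inductive SpSpine : Type
  | nil
  | cons (a : SpTy) (s : SpSpine)

/-- Kinds in spine form: `K ::= A..B | (X:J)→K`. -/
inductive SpKd : Type
  | intv (a b : SpTy)
  | pi (j k : SpKd)
end

/-- Shape erasure of spine-form kinds: `|A..B| = ∗`, `|(X:J)→K| = |J| → |K|`. -/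
def SpKd.shape : SpKd → SKind
  | .intv _ _ => .star
  | .pi j k => .arr j.shape k.shape

/-- Spine concatenation. -/
def SpSpine.append : SpSpine → SpSpine → SpSpine
  | .nil, s' => s'
  | .cons a s, s' => .cons a (s.append s')

/-- (Non-reducing) application of an elimination to a spine. -/
def SpTy.appSp : SpTy → SpSpine → SpTy
  | .elim h s, s' => .elim h (s.append s')

/-- (Non-reducing) application of an elimination to a single argument. -/
def SpTy.app1 (e d : SpTy) : SpTy := e.appSp (.cons d .nil)

mutual
/-- Shift: increment all variables `≥ c` by one. -/
def SpTy.shift (c : ℕ) : SpTy → SpTy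
  | .elim h s => .elim (h.shift c) (s.shift c)

def SpHead.shift (c : ℕ) : SpHead → SpHead
  | .var x => if x < c then .var x else .var (x + 1)
  | .top => .top
  | .bot => .bot
  | .arr a b => .arr (a.shift c) (b.shift c)
  | .all k a => .all (k.shift c) (a.shift (c + 1))
  | .lam k a => .lam (k.shift c) (a.shift (c + 1))

def SpSpine.shift (c : ℕ) : SpSpine → SpSpine
  | .nil => .nil
  | .cons a s => .cons (a.shift c) (s.shift c)

def SpKd.shift (c : ℕ) : SpKd → SpKd
  | .intv a b => .intv (a.shift c) (b.shift c)
  | .pi j k => .pi (j.shift c) (k.shift (c + 1))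
end

/-- Weakening by `n` fresh innermost variables. -/
def SpTy.weaken (n : ℕ) (e : SpTy) : SpTy := (SpTy.shift 0)^[n] e

/-- Weakening of kinds by `n` fresh innermost variables. -/
def SpKd.weaken (n : ℕ) (k : SpKd) : SpKd := (SpKd.shift 0)^[n] k

mutual
/-- Ordinary (capture-avoiding, non-hereditary) substitution on spine form. -/
def SpTy.subst : SpTy → ℕ → SpTy → SpTy
  | .elim (.var y) s, x, v =>
      if y = x then v.appSp (s.subst x v)
      else .elim (.var (if x < y then y - 1 else y)) (s.subst x v)
  | .elim .top s, x, v => .elim .top (s.subst x v)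
  | .elim .bot s, x, v => .elim .bot (s.subst x v)
  | .elim (.arr a b) s, x, v => .elim (.arr (a.subst x v) (b.subst x v)) (s.subst x v)
  | .elim (.all k a) s, x, v =>
      .elim (.all (k.subst x v) (a.subst (x + 1) (v.shift 0))) (s.subst x v)
  | .elim (.lam k a) s, x, v =>
      .elim (.lam (k.subst x v) (a.subst (x + 1) (v.shift 0))) (s.subst x v)

def SpSpine.subst : SpSpine → ℕ → SpTy → SpSpine
  | .nil, _, _ => .nil
  | .cons a s, x, v => .cons (a.subst x v) (s.subst x v)

def SpKd.subst : SpKd → ℕ → SpTy → SpKd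
  | .intv a b, x, v => .intv (a.subst x v) (b.subst x v)
  | .pi j k, x, v => .pi (j.subst x v) (k.subst (x + 1) (v.shift 0))
end

mutual
/-- Hereditary substitution `e[x := v]_k` of the elimination `v` for variable
`x` at shape `k`, defined mutually with reducing application by recursion on
the shape `k`. -/
def SpTy.hsubst : SpTy → ℕ → SKind → SpTy → SpTy
  | .elim (.var y) s, x, k, v =>
      if y = x then SpTy.rappSp v k (s.hsubst x k v)
      else .elim (.var (if x < y then y - 1 else y)) (s.hsubst x k v)
  | .elim .top s, x, k, v => .elim .top (s.hsubst x k v)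
  | .elim .bot s, x, k, v => .elim .bot (s.hsubst x k v)
  | .elim (.arr a b) s, x, k, v =>
      .elim (.arr (a.hsubst x k v) (b.hsubst x k v)) (s.hsubst x k v)
  | .elim (.all j a) s, x, k, v =>
      .elim (.all (j.hsubst x k v) (a.hsubst (x + 1) k (v.shift 0))) (s.hsubst x k v)
  | .elim (.lam j a) s, x, k, v =>
      .elim (.lam (j.hsubst x k v) (a.hsubst (x + 1) k (v.shift 0))) (s.hsubst x k v)
termination_by e x k v => (sizeOf k, 1, sizeOf e)

/-- Hereditary substitution in spines (pointwise). -/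
def SpSpine.hsubst : SpSpine → ℕ → SKind → SpTy → SpSpine
  | .nil, _, _, _ => .nil
  | .cons a s, x, k, v => .cons (a.hsubst x k v) (s.hsubst x k v)
termination_by s x k v => (sizeOf k, 1, sizeOf s)

/-- Hereditary substitution in kinds. -/
def SpKd.hsubst : SpKd → ℕ → SKind → SpTy → SpKd
  | .intv a b, x, k, v => .intv (a.hsubst x k v) (b.hsubst x k v)
  | .pi j k', x, k, v => .pi (j.hsubst x k v) (k'.hsubst (x + 1) k (v.shift 0))
termination_by K x k v => (sizeOf k, 1, sizeOf K)

/-- Reducing application `d ·_k v` to a single argument:  β-contracts when `d`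
is an operator abstraction and `k` is an arrow shape. -/
def SpTy.rapp : SpTy → SKind → SpTy → SpTy
  | d, .star, v => d.app1 v
  | .elim (.lam _ d') .nil, .arr k1 _, v => d'.hsubst 0 k1 v
  | .elim (.var y) s, .arr _ _, v => SpTy.app1 (.elim (.var y) s) v
  | .elim .top s, .arr _ _, v => SpTy.app1 (.elim .top s) v
  | .elim .bot s, .arr _ _, v => SpTy.app1 (.elim .bot s) v
  | .elim (.arr a b) s, .arr _ _, v => SpTy.app1 (.elim (.arr a b) s) v
  | .elim (.all j a) s, .arr _ _, v => SpTy.app1 (.elim (.all j a) s) v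
  | .elim (.lam j a) (.cons b s), .arr _ _, v => SpTy.app1 (.elim (.lam j a) (.cons b s)) v
termination_by d k v => (sizeOf k, 0, 0)

/-- Reducing application `d ·_k s⃗` to a spine, unwinding `s⃗` along `k`. -/
def SpTy.rappSp : SpTy → SKind → SpSpine → SpTy
  | d, _, .nil => d
  | d, .arr k1 k2, .cons e es => SpTy.rappSp (d.rapp (.arr k1 k2) e) k2 es
  | d, .star, .cons e es => d.appSp (.cons e es)
termination_by d k s => (sizeOf k, 0, sizeOf s + 1)
end

/-- **Stability of shapes under hereditary substitution**: for any kind `J`,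
variable `X`, shape `k` and elimination `A`, `|J[X:=A]_k| ≡ |J|`. -/
theorem shape_stable_hsubst : ∀ (J : SpKd) (x : ℕ) (k : SKind) (A : SpTy),
    (J.hsubst x k A).shape = J.shape
  | .intv _ _, _, _, _ => by rw [SpKd.hsubst, SpKd.shape, SpKd.shape]
  | .pi j k', x, k, A => by
      rw [SpKd.hsubst, SpKd.shape, SpKd.shape, shape_stable_hsubst j, shape_stable_hsubst k']
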